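/- Every unary matrix function f of the matrix M^{BD,∘} (a composition of projections and the truth functions of ¬, ∧, ∨, ∘) satisfies: either f(b) = b and f(n) = n, or f(b) = f(n) ∈ {t, f}. Consequently, the consistency connective C (with C(b) = f, C(n) = t) and the determinedness connective D (with D(b) = t, D(n) = f) are not definable in BD^{C,D,∘} in terms of {¬, ∧, ∨, ∘}, and hence BD^{C,D} is not interdefinable with BD^{∘}. -/
import Mathlib


namespace BD16

/-- The four truth values of Belnap-Dunn logic:
`t` (true), `f` (false), `b` (both true and false), `n` (neither true nor false). -/
inductive V4 : Type
  | t | f | b | n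
deriving DecidableEq, Repr

namespace V4

/-- `a` lies above truth in the Belnap-Dunn bilattice (i.e. `a ∈ {t, b}`). -/
def hasT : V4 → Bool
  | t => true
  | b => true
  | _ => false

/-- `a` lies above falsity in the Belnap-Dunn bilattice (i.e. `a ∈ {f, b}`). -/
def hasF : V4 → Bool
  | f => true
  | b => true
  | _ => false

def ofTF : Bool → Bool → V4
  | true, true => b
  | true, false => t
  | false, true => f
  | false, false => n

/-- Interpretation of ¬: swaps `t` and `f`, fixes `b` and `n`. -/
def neg4 : V4 → V4
  | t => f
  | f => t
  | b => b
  | n => n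

/-- Interpretation of ∧: greatest lower bound in the lattice order on `V4`
with `f` least, `t` greatest, `b` and `n` incomparable. -/
def and4 (x y : V4) : V4 := ofTF (x.hasT && y.hasT) (x.hasF || y.hasF)

/-- Interpretation of ∨: least upper bound in the lattice order on `V4`
with `f` least, `t` greatest, `b` and `n` incomparable. -/
def or4 (x y : V4) : V4 := ofTF (x.hasT || y.hasT) (x.hasF && y.hasF)

/-- Interpretation of →: `a₁ → a₂ = t` if `a₁ ∉ {t, b}`, and `a₂` otherwise. -/
def imp4 (x y : V4) : V4 := if x = t ∨ x = b then y else t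

/-- The designated truth values: `t` and `b`. -/
def desig (x : V4) : Prop := x = t ∨ x = b

end V4

/-- Interpretation of the classicality connective ∘:
`∘(a) = t` if `a ∈ {t, f}` and `f` otherwise. -/
def circV (a : V4) : V4 := if a = V4.t ∨ a = V4.f then V4.t else V4.f

/-- Interpretation of the consistency connective C:
`C(a) = t` if `a ∈ {t, f, n}` and `f` otherwise (so `C(b) = f`, `C(n) = t`). -/
def consV (a : V4) : V4 := if a = V4.b then V4.f else V4.t

/-- Interpretation of the determinedness connective D:
`D(a) = t` if `a ∈ {t, f, b}` and `f` otherwise (so `D(b) = t`, `D(n) = f`). -/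
def detV (a : V4) : V4 := if a = V4.n then V4.f else V4.t

/-- The unary matrix functions of the matrix `M^{BD,∘}`: the unary functions on
the truth values obtainable by composition from projections and the truth
functions of ¬, ∧, ∨, ∘. -/
inductive IsUnaryMF : (V4 → V4) → Prop
  | id : IsUnaryMF (fun a => a)
  | neg {g : V4 → V4} : IsUnaryMF g → IsUnaryMF (fun a => V4.neg4 (g a))
  | and {g h : V4 → V4} : IsUnaryMF g → IsUnaryMF h →
      IsUnaryMF (fun a => V4.and4 (g a) (h a))
  | or {g h : V4 → V4} : IsUnaryMF g → IsUnaryMF h →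
      IsUnaryMF (fun a => V4.or4 (g a) (h a))
  | circ {g : V4 → V4} : IsUnaryMF g → IsUnaryMF (fun a => circV (g a))

/-- Formulas of the common expansion BD^{C,D,∘} of BD^{C,D} and BD^{∘}. -/
inductive Fm : Type
  | var : ℕ → Fm
  | neg : Fm → Fm
  | and : Fm → Fm → Fm
  | or : Fm → Fm → Fm
  | circ : Fm → Fm
  | cons : Fm → Fm
  | det : Fm → Fm
deriving DecidableEq

/-- The valuation in the matrix `M^{BD,∘,C,D}` determined by an assignment of
truth values to the propositional variables. -/
def val (v : ℕ → V4) : Fm → V4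
  | .var p => v p
  | .neg A => V4.neg4 (val v A)
  | .and A B => V4.and4 (val v A) (val v B)
  | .or A B => V4.or4 (val v A) (val v B)
  | .circ A => circV (val v A)
  | .cons A => consV (val v A)
  | .det A => detV (val v A)

/-- A formula contains only the connectives ¬, ∧, ∨, ∘
(the connectives of BD^{∘}). -/
def OnlyCirc : Fm → Prop
  | .var _ => True
  | .neg A => OnlyCirc A
  | .and A B => OnlyCirc A ∧ OnlyCirc B
  | .or A B => OnlyCirc A ∧ OnlyCirc B
  | .circ A => OnlyCirc A
  | .cons _ => False
  | .det _ => False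

/-- A formula contains only the connectives ¬, ∧, ∨, C, D
(the connectives of BD^{C,D}). -/
def OnlyConsDet : Fm → Prop
  | .var _ => True
  | .neg A => OnlyConsDet A
  | .and A B => OnlyConsDet A ∧ OnlyConsDet B
  | .or A B => OnlyConsDet A ∧ OnlyConsDet B
  | .circ _ => False
  | .cons A => OnlyConsDet A
  | .det A => OnlyConsDet A

lemma keyMF : ∀ g : V4 → V4, IsUnaryMF g →
    (g V4.b = V4.b ∧ g V4.n = V4.n) ∨
    (g V4.b = V4.t ∧ g V4.n = V4.t) ∨
    (g V4.b = V4.f ∧ g V4.n = V4.f) := by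
  intro g hg
  induction hg with
  | id => left; exact ⟨rfl, rfl⟩
  | neg _ ih =>
    rcases ih with ⟨h1, h2⟩ | ⟨h1, h2⟩ | ⟨h1, h2⟩ <;> simp only [h1, h2] <;> decide
  | and _ _ ihg ihh =>
    rcases ihg with ⟨h1, h2⟩ | ⟨h1, h2⟩ | ⟨h1, h2⟩ <;>
      rcases ihh with ⟨k1, k2⟩ | ⟨k1, k2⟩ | ⟨k1, k2⟩ <;>
      simp only [h1, h2, k1, k2] <;> decide
  | or _ _ ihg ihh =>
    rcases ihg with ⟨h1, h2⟩ | ⟨h1, h2⟩ | ⟨h1, h2⟩ <;>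
      rcases ihh with ⟨k1, k2⟩ | ⟨k1, k2⟩ | ⟨k1, k2⟩ <;>
      simp only [h1, h2, k1, k2] <;> decide
  | circ _ ih =>
    rcases ih with ⟨h1, h2⟩ | ⟨h1, h2⟩ | ⟨h1, h2⟩ <;> simp only [h1, h2] <;> decide

lemma onlyCircMF : ∀ A : Fm, OnlyCirc A → IsUnaryMF (fun a => val (fun _ => a) A) := by
  intro A hA
  induction A with
  | var p => exact IsUnaryMF.id
  | neg A ih => exact IsUnaryMF.neg (ih hA)
  | and A B ihA ihB => exact IsUnaryMF.and (ihA hA.1) (ihB hA.2)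
  | or A B ihA ihB => exact IsUnaryMF.or (ihA hA.1) (ihB hA.2)
  | circ A ih => exact IsUnaryMF.circ (ih hA)
  | cons A _ => exact absurd hA id
  | det A _ => exact absurd hA id

/-- every unary matrix function `g` of `M^{BD,∘}` satisfies
either `g(b) = b` and `g(n) = n`, or `g(b) = g(n) ∈ {t, f}`; consequently the
consistency connective C and the determinedness connective D are not definable
in BD^{C,D,∘} in terms of {¬, ∧, ∨, ∘}, and hence BD^{C,D} is not
interdefinable with BD^{∘}. -/
theorem stmt16 :
    (∀ g : V4 → V4, IsUnaryMF g →
        (g V4.b = V4.b ∧ g V4.n = V4.n) ∨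
        (g V4.b = g V4.n ∧ (g V4.b = V4.t ∨ g V4.b = V4.f))) ∧
    (¬ ∃ (p : ℕ) (A : Fm), OnlyCirc A ∧
        ∀ v : ℕ → V4, val v (Fm.cons (Fm.var p)) = val v A) ∧
    (¬ ∃ (p : ℕ) (A : Fm), OnlyCirc A ∧
        ∀ v : ℕ → V4, val v (Fm.det (Fm.var p)) = val v A) ∧
    -- BD^{C,D} is not interdefinable with BD^{∘}: it is not the case that, in
    -- the common expansion BD^{C,D,∘}, the connectives of each are definable
    -- in terms of the connectives of the other.
    (¬ (((∃ (p : ℕ) (A : Fm), OnlyCirc A ∧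
            ∀ v : ℕ → V4, val v (Fm.cons (Fm.var p)) = val v A) ∧
         (∃ (p : ℕ) (A : Fm), OnlyCirc A ∧
            ∀ v : ℕ → V4, val v (Fm.det (Fm.var p)) = val v A)) ∧
        (∃ (p : ℕ) (A : Fm), OnlyConsDet A ∧
            ∀ v : ℕ → V4, val v (Fm.circ (Fm.var p)) = val v A))) := by
  have hC : ¬ ∃ (p : ℕ) (A : Fm), OnlyCirc A ∧
      ∀ v : ℕ → V4, val v (Fm.cons (Fm.var p)) = val v A := by
    rintro ⟨p, A, hA, hv⟩
    have hb := hv (fun _ => V4.b)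
    have hn := hv (fun _ => V4.n)
    rcases keyMF _ (onlyCircMF A hA) with ⟨h1, h2⟩ | ⟨h1, h2⟩ | ⟨h1, h2⟩ <;>
      simp only [val, consV] at hb hn <;> rw [h1] at hb <;> rw [h2] at hn <;>
      simp_all
  have hD : ¬ ∃ (p : ℕ) (A : Fm), OnlyCirc A ∧
      ∀ v : ℕ → V4, val v (Fm.det (Fm.var p)) = val v A := by
    rintro ⟨p, A, hA, hv⟩
    have hb := hv (fun _ => V4.b)
    have hn := hv (fun _ => V4.n)
    rcases keyMF _ (onlyCircMF A hA) with ⟨h1, h2⟩ | ⟨h1, h2⟩ | ⟨h1, h2⟩ <;>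
      simp only [val, detV] at hb hn <;> rw [h1] at hb <;> rw [h2] at hn <;>
      simp_all
  refine ⟨?_, hC, hD, ?_⟩
  · intro g hg
    rcases keyMF g hg with ⟨h1, h2⟩ | ⟨h1, h2⟩ | ⟨h1, h2⟩
    · exact Or.inl ⟨h1, h2⟩
    · exact Or.inr ⟨h1.trans h2.symm, Or.inl h1⟩
    · exact Or.inr ⟨h1.trans h2.symm, Or.inr h1⟩
  · rintro ⟨⟨h1, _⟩, _⟩
    exact hC h1

end BD16
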